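/- Assume the block setup and QR setup. Decompose the j-th block GMRES update S_j^{(G)} = X_j^{(G)} − X_{j−1}^{(G)} as S_j^{(G)} = S_{j,1} + S_{j,2}, where S_{j,1} = W_{j−1} W_{j−1}ᴴ S_j^{(G)} (its columns lie in 𝕂_{j−1}(A,F₀)) and S_{j,2} = V_j V_jᴴ S_j^{(G)} (its columns lie in the column space of V_j). Then the matrix 𝔑_j := −W_{j−1} R_{j−1}^{−1} Z_j V_jᴴ ∈ ℂ^{n×n} satisfies 𝔑_j² = 0, its column space is contained in 𝕂_{j−1}(A,F₀), it annihilates the orthogonal complement of the column space of V_j, and S_{j,1} = 𝔑_j S_{j,2}. -/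

import Mathlib

open Matrix

noncomputable section

set_option maxHeartbeats 1000000

/-- Squared Frobenius norm of a complex matrix. -/
def frobSq {a b : Type*} [Fintype a] [Fintype b] (M : Matrix a b ℂ) : ℝ :=
  ∑ r, ∑ c, Complex.normSq (M r c)

/-- The four Moore–Penrose conditions. -/
def IsMoorePenrose {a b : Type*} [Fintype a] [Fintype b]
    (M : Matrix a b ℂ) (P : Matrix b a ℂ) : Prop :=
  M * P * M = M ∧ P * M * P = P ∧ (M * P)ᴴ = M * P ∧ (P * M)ᴴ = P * M

/-- The block Krylov subspace `𝕂_i(A, F)`: the span of all columns of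
`F, A F, …, A^(i-1) F`. -/
def blockKrylov {n L : ℕ} (A : Matrix (Fin n) (Fin n) ℂ)
    (F : Matrix (Fin n) (Fin L) ℂ) (i : ℕ) : Submodule ℂ (Fin n → ℂ) :=
  Submodule.span ℂ { v | ∃ k < i, ∃ c : Fin L, v = fun r => (A ^ k * F) r c }

/-- `E_L^{[mL]}` : the first `L` columns of the `mL × mL` identity matrix
(block row indexing). -/
def EL (m L : ℕ) : Matrix (Fin m × Fin L) (Fin L) ℂ :=
  Matrix.of fun r c => if (r.1 : ℕ) = 0 ∧ r.2 = c then 1 else 0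

/-- An `L × L` matrix is upper triangular. -/
def utL {L : ℕ} (M : Matrix (Fin L) (Fin L) ℂ) : Prop :=
  ∀ a b : Fin L, (b : ℕ) < (a : ℕ) → M a b = 0

/-- A block-indexed `mL × mL` matrix is upper triangular. -/
def utBig {m L : ℕ} (M : Matrix (Fin m × Fin L) (Fin m × Fin L) ℂ) : Prop :=
  ∀ r c : Fin m × Fin L, (c.1 : ℕ) * L + (c.2 : ℕ) < (r.1 : ℕ) * L + (r.2 : ℕ) → M r c = 0

/-- Stack a block-tall matrix on top of an extra block row. -/
def vcat {m L : ℕ} {col : Type*} (T : Matrix (Fin m × Fin L) col ℂ)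
    (Bo : Matrix (Fin L) col ℂ) : Matrix (Fin (m+1) × Fin L) col ℂ :=
  Matrix.of fun r cc => if h : (r.1 : ℕ) < m then T (⟨r.1, h⟩, r.2) cc else Bo r.2 cc

/-- The block matrix `[[R, Z], [0, N]]`. -/
def twoBlock {m L : ℕ} (R : Matrix (Fin m × Fin L) (Fin m × Fin L) ℂ)
    (Z : Matrix (Fin m × Fin L) (Fin L) ℂ) (N : Matrix (Fin L) (Fin L) ℂ) :
    Matrix (Fin (m+1) × Fin L) (Fin (m+1) × Fin L) ℂ :=
  Matrix.of fun r c =>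
    if hr : (r.1 : ℕ) < m then
      if hc : (c.1 : ℕ) < m then R (⟨r.1, hr⟩, r.2) (⟨c.1, hc⟩, c.2)
      else Z (⟨r.1, hr⟩, r.2) c.2
    else
      if (c.1 : ℕ) < m then 0 else N r.2 c.2

/-- The block matrix `[[R, Z], [0, Hmid], [0, Hbot]]`. -/
def threeBlock {m L : ℕ} (R : Matrix (Fin m × Fin L) (Fin m × Fin L) ℂ)
    (Z : Matrix (Fin m × Fin L) (Fin L) ℂ) (Hmid Hbot : Matrix (Fin L) (Fin L) ℂ) :
    Matrix (Fin (m+2) × Fin L) (Fin (m+1) × Fin L) ℂ :=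
  Matrix.of fun r c =>
    if hr : (r.1 : ℕ) < m then
      if hc : (c.1 : ℕ) < m then R (⟨r.1, hr⟩, r.2) (⟨c.1, hc⟩, c.2)
      else Z (⟨r.1, hr⟩, r.2) c.2
    else
      if (c.1 : ℕ) < m then 0
      else if (r.1 : ℕ) = m then Hmid r.2 c.2 else Hbot r.2 c.2

/-- `diag(Q, I_L)` : extend a block-indexed square matrix by an identity block. -/
def extendOne {m L : ℕ} (Q : Matrix (Fin m × Fin L) (Fin m × Fin L) ℂ) :
    Matrix (Fin (m+1) × Fin L) (Fin (m+1) × Fin L) ℂ :=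
  Matrix.of fun r c =>
    if hr : (r.1 : ℕ) < m then
      if hc : (c.1 : ℕ) < m then Q (⟨r.1, hr⟩, r.2) (⟨c.1, hc⟩, c.2) else 0
    else
      if (c.1 : ℕ) < m then 0 else if r.2 = c.2 then 1 else 0

/-- `diag(I_{mL}, Q)` : an identity block, then `Q` in the bottom right corner. -/
def extendBot {m L : ℕ} (Q : Matrix (Fin L) (Fin L) ℂ) :
    Matrix (Fin (m+1) × Fin L) (Fin (m+1) × Fin L) ℂ :=
  Matrix.of fun r c =>
    if (r.1 : ℕ) < m ∨ (c.1 : ℕ) < m then (if r = c then 1 else 0)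
    else Q r.2 c.2

/-- The `(m+2)L × (m+2)L` matrix which is the identity outside of its trailing
principal `2L × 2L` block, which is `[[Q11, Q12], [Q21, Q22]]`. -/
def trailingTwo {m L : ℕ} (Q11 Q12 Q21 Q22 : Matrix (Fin L) (Fin L) ℂ) :
    Matrix (Fin (m+2) × Fin L) (Fin (m+2) × Fin L) ℂ :=
  Matrix.of fun r c =>
    if (r.1 : ℕ) < m ∨ (c.1 : ℕ) < m then (if r = c then 1 else 0)
    else if (r.1 : ℕ) = m then
      (if (c.1 : ℕ) = m then Q11 r.2 c.2 else Q12 r.2 c.2)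
    else
      (if (c.1 : ℕ) = m then Q21 r.2 c.2 else Q22 r.2 c.2)

/-- The block matrix `[R ; 0]` (one extra zero block row below `R`). -/
def stackZero {m L : ℕ} (R : Matrix (Fin m × Fin L) (Fin m × Fin L) ℂ) :
    Matrix (Fin (m+1) × Fin L) (Fin m × Fin L) ℂ :=
  Matrix.of fun r c => if h : (r.1 : ℕ) < m then R (⟨r.1, h⟩, r.2) c else 0

/-- A breakdown-free block Arnoldi decomposition of length `j = p + 1` for the block
linear system `A X = B` with initial guess `X₀` (block size `L`). -/
structure BlockArnoldi (n L p : ℕ) : Type where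
  A : Matrix (Fin n) (Fin n) ℂ
  B : Matrix (Fin n) (Fin L) ℂ
  X0 : Matrix (Fin n) (Fin L) ℂ
  W : Matrix (Fin n) (Fin (p+2) × Fin L) ℂ
  S0 : Matrix (Fin L) (Fin L) ℂ
  Hbar : Matrix (Fin (p+2) × Fin L) (Fin (p+1) × Fin L) ℂ
  hL : 1 ≤ L
  hn : (p+2) * L ≤ n
  F0_rank : (B - A * X0).rank = L
  orth : Wᴴ * W = 1
  S0_ut : utL S0
  S0_inv : IsUnit S0
  F0_eq : B - A * X0 = (W.submatrix id fun c : Fin L => ((0 : Fin (p+2)), c)) * S0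
  span : ∀ i : ℕ, i ≤ p + 2 →
    blockKrylov A (B - A * X0) i =
      Submodule.span ℂ { v | ∃ c : Fin (p+2) × Fin L, (c.1 : ℕ) < i ∧ v = fun r => W r c }
  arnoldi : A * W.submatrix id (Prod.map Fin.castSucc id) = W * Hbar
  hess : ∀ r c, (c.1 : ℕ) + 1 < (r.1 : ℕ) → Hbar r c = 0
  sub_ut : ∀ (k : Fin (p+1)) (a b : Fin L), (b : ℕ) < (a : ℕ) → Hbar (k.succ, a) (k, b) = 0
  sub_inv : ∀ k : Fin (p+1), IsUnit (Matrix.of fun a b : Fin L => Hbar (k.succ, a) (k, b))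

namespace BlockArnoldi

variable {n L p : ℕ}

/-- `H̄_{j-1}`, the leading `jL × (j-1)L` submatrix of `H̄_j`. -/
def Hprev (D : BlockArnoldi n L p) : Matrix (Fin (p+1) × Fin L) (Fin p × Fin L) ℂ :=
  D.Hbar.submatrix (Prod.map Fin.castSucc id) (Prod.map Fin.castSucc id)

/-- `H_j`, the leading `jL × jL` submatrix of `H̄_j`. -/
def Hsq (D : BlockArnoldi n L p) : Matrix (Fin (p+1) × Fin L) (Fin (p+1) × Fin L) ℂ :=
  D.Hbar.submatrix (Prod.map Fin.castSucc id) id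

/-- `W_j = [V₁ … V_j]`. -/
def Wfull (D : BlockArnoldi n L p) : Matrix (Fin n) (Fin (p+1) × Fin L) ℂ :=
  D.W.submatrix id (Prod.map Fin.castSucc id)

/-- `W_{j-1} = [V₁ … V_{j-1}]`. -/
def Wprev (D : BlockArnoldi n L p) : Matrix (Fin n) (Fin p × Fin L) ℂ :=
  D.W.submatrix id (Prod.map (fun i : Fin p => (i.castSucc.castSucc : Fin (p+2))) id)

/-- `V_j`, the `j`-th block Arnoldi vector. -/
def Vj (D : BlockArnoldi n L p) : Matrix (Fin n) (Fin L) ℂ :=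
  D.W.submatrix id fun c : Fin L => (((Fin.last p).castSucc : Fin (p+2)), c)

end BlockArnoldi

/-- `Y` is the unique minimizer of `‖Hb • Y' - T‖_F` over all `Y'`. -/
def IsUniqueFrobMin {a b c : Type*} [Fintype a] [Fintype b] [Fintype c]
    (Hb : Matrix a b ℂ) (T : Matrix a c ℂ) (Y : Matrix b c ℂ) : Prop :=
  (∀ Y', frobSq (Hb * Y - T) ≤ frobSq (Hb * Y' - T)) ∧
  ∀ Y', (∀ Y'', frobSq (Hb * Y' - T) ≤ frobSq (Hb * Y'' - T)) → Y' = Y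

/-- `Y_j^{(G)}` is the solution of the `j`-th block GMRES least-squares subproblem. -/
def IsBlockGMRESj {n L p : ℕ} (D : BlockArnoldi n L p)
    (Y : Matrix (Fin (p+1) × Fin L) (Fin L) ℂ) : Prop :=
  IsUniqueFrobMin D.Hbar (EL (p+2) L * D.S0) Y

/-- `Y_{j-1}^{(G)}` is the solution of the `(j-1)`-st block GMRES least-squares
subproblem. -/
def IsBlockGMRESprev {n L p : ℕ} (D : BlockArnoldi n L p)
    (Y : Matrix (Fin p × Fin L) (Fin L) ℂ) : Prop :=
  IsUniqueFrobMin D.Hprev (EL (p+1) L * D.S0) Y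

/-- The QR setup at step `j = p+1` : a QR factorization `Q̄_{j-1} H̄_{j-1} = [R_{j-1}; 0]`
from the previous step, the induced splitting
`diag(Q̄_{j-1}, I_L)·H̄_j = [[R,Z],[0,Ĥ_{jj}],[0,H_{j+1,j}]]`, the unitary `Q_j`
(identity outside its trailing principal `2L×2L` block) completing the
QR factorization of `H̄_j`, and the unitary `Q̂_j^{(b)}` triangularizing `Ĥ_{jj}`. -/
structure QRSetup (L p : ℕ) (Hbar : Matrix (Fin (p+2) × Fin L) (Fin (p+1) × Fin L) ℂ)
    (S0 : Matrix (Fin L) (Fin L) ℂ) : Type where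
  Qbar : Matrix (Fin (p+1) × Fin L) (Fin (p+1) × Fin L) ℂ
  R : Matrix (Fin p × Fin L) (Fin p × Fin L) ℂ
  Z : Matrix (Fin p × Fin L) (Fin L) ℂ
  Hhat : Matrix (Fin L) (Fin L) ℂ
  Hsub : Matrix (Fin L) (Fin L) ℂ
  Q11 : Matrix (Fin L) (Fin L) ℂ
  Q12 : Matrix (Fin L) (Fin L) ℂ
  Q21 : Matrix (Fin L) (Fin L) ℂ
  Q22 : Matrix (Fin L) (Fin L) ℂ
  N : Matrix (Fin L) (Fin L) ℂ
  Qhatb : Matrix (Fin L) (Fin L) ℂ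
  Nhat : Matrix (Fin L) (Fin L) ℂ
  Qbar_unit : Qbarᴴ * Qbar = 1
  Qbar_base : p = 0 → Qbar = 1
  R_ut : utBig R
  R_inv : IsUnit R
  qr_prev : Qbar * Hbar.submatrix (Prod.map Fin.castSucc id) (Prod.map Fin.castSucc id)
      = stackZero R
  qr_split : extendOne Qbar * Hbar = threeBlock R Z Hhat Hsub
  Qj_unit : (trailingTwo (m := p) Q11 Q12 Q21 Q22)ᴴ * trailingTwo (m := p) Q11 Q12 Q21 Q22 = 1
  qr_full : trailingTwo (m := p) Q11 Q12 Q21 Q22 * (extendOne Qbar * Hbar)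
      = threeBlock R Z N 0
  N_ut : utL N
  N_inv : IsUnit N
  Qhatb_unit : Qhatbᴴ * Qhatb = 1
  Nhat_def : Nhat = Qhatb * Hhat
  Nhat_ut : utL Nhat

namespace QRSetup

variable {L p : ℕ} {Hbar : Matrix (Fin (p+2) × Fin L) (Fin (p+1) × Fin L) ℂ}
  {S0 : Matrix (Fin L) (Fin L) ℂ}

/-- `C̃_j` : the last `L` rows of `Q̄_{j-1} E_L^{[jL]} S₀`. -/
def Ct (S : QRSetup L p Hbar S0) : Matrix (Fin L) (Fin L) ℂ :=
  Matrix.of fun a b => (S.Qbar * (EL (p+1) L * S0)) ((Fin.last p), a) b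

/-- `C_j := Q_j^{(11)} C̃_j`. -/
def C (S : QRSetup L p Hbar S0) : Matrix (Fin L) (Fin L) ℂ := S.Q11 * S.Ct

/-- `Ĉ_j := Q̂_j^{(b)} C̃_j`. -/
def Chat (S : QRSetup L p Hbar S0) : Matrix (Fin L) (Fin L) ℂ := S.Qhatb * S.Ct

end QRSetup

/-!
The unitary factors of the QR setup turn both block GMRES least-squares problems into block upper
triangular ones with the same right-hand side `t` on the top `(j-1)L` rows. There the top rows can
always be solved exactly, so uniqueness of the minimizers forces `Y_{j-1} = R⁻¹ t` and
`Y_j = [R⁻¹ (t - Z y); y]`, where `y` is the last block of `Y_j`. Hence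
`S_j = (V_j - W_{j-1} R⁻¹ Z) y`, and all four claims follow from the orthonormality of
`[W_{j-1} V_j]`.
-/

namespace Matrix

lemma fromRows_sub_fromRows {m k b R : Type*} [Sub R] (A₁ : Matrix m b R)
    (A₂ : Matrix k b R) (B₁ : Matrix m b R) (B₂ : Matrix k b R) :
    fromRows A₁ A₂ - fromRows B₁ B₂ = fromRows (A₁ - B₁) (A₂ - B₂) := by
  ext (_ | _) _ <;> rfl

lemma conjTranspose_mul_self_submatrix_id {m ι κ : Type*} [Fintype m] [DecidableEq ι]
    [DecidableEq κ] {W : Matrix m ι ℂ} (hW : Wᴴ * W = 1) {f : κ → ι} (hf : Function.Injective f) :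
    (W.submatrix id f)ᴴ * W.submatrix id f = 1 := by
  rw [conjTranspose_submatrix, ← submatrix_mul _ _ _ _ _ Function.bijective_id, hW,
    submatrix_one f hf]

lemma conjTranspose_mul_self_eq_one_of_submatrix {ι κ : Type*} [Fintype ι] [Fintype κ]
    [DecidableEq ι] [DecidableEq κ] {U : Matrix ι ι ℂ} (e : κ ≃ ι)
    (h : (U.submatrix e e)ᴴ * U.submatrix e e = 1) : Uᴴ * U = 1 := by
  rw [conjTranspose_submatrix, submatrix_mul_equiv] at h
  simpa using congrArg (fun M => M.submatrix e.symm e.symm) h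

end Matrix

section Frobenius

variable {a b c : Type*} [Fintype a] [Fintype b] [Fintype c]

lemma frobSq_nonneg (M : Matrix a b ℂ) : 0 ≤ frobSq M :=
  Finset.sum_nonneg fun _ _ => Finset.sum_nonneg fun _ _ => Complex.normSq_nonneg _

lemma frobSq_zero : frobSq (0 : Matrix a b ℂ) = 0 := by
  simp [frobSq]

lemma frobSq_fromRows {a' : Type*} [Fintype a'] (M : Matrix a c ℂ) (N : Matrix a' c ℂ) :
    frobSq (fromRows M N) = frobSq M + frobSq N := by
  simp [frobSq, Fintype.sum_sum_type]

lemma frobSq_submatrix {a' b' : Type*} [Fintype a'] [Fintype b'] (M : Matrix a b ℂ)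
    (e : a' ≃ a) (f : b' ≃ b) : frobSq (M.submatrix e f) = frobSq M := by
  simp only [frobSq, submatrix_apply]
  rw [e.sum_comp (fun r => ∑ c', Complex.normSq (M r (f c')))]
  exact Finset.sum_congr rfl fun r _ => f.sum_comp (fun c' => Complex.normSq (M r c'))

lemma frobSq_eq_sum_re (M : Matrix a b ℂ) : frobSq M = ∑ j, ((Mᴴ * M) j j).re := by
  rw [frobSq, Finset.sum_comm]
  refine Finset.sum_congr rfl fun j _ => ?_
  simp [mul_apply, Complex.re_sum, ← Complex.normSq_eq_conj_mul_self]

lemma frobSq_unitary_mul [DecidableEq a] {U : Matrix a a ℂ} (hU : Uᴴ * U = 1) (M : Matrix a b ℂ) :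
    frobSq (U * M) = frobSq M := by
  rw [frobSq_eq_sum_re, frobSq_eq_sum_re, conjTranspose_mul, Matrix.mul_assoc,
    ← Matrix.mul_assoc Uᴴ, hU, Matrix.one_mul]

end Frobenius

section LeastSquares

variable {a b c : Type*} [Fintype a] [Fintype b] [Fintype c]
  {H : Matrix a b ℂ} {T : Matrix a c ℂ} {Y : Matrix b c ℂ}

-- `IsUniqueFrobMin` quantifies over the type synonym `CStarMatrix`; this restates it over `Matrix`.
lemma isUniqueFrobMin_iff : IsUniqueFrobMin H T Y ↔
    (∀ Y' : Matrix b c ℂ, frobSq (H * Y - T) ≤ frobSq (H * Y' - T)) ∧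
      ∀ Y' : Matrix b c ℂ, (∀ Y'' : Matrix b c ℂ, frobSq (H * Y' - T) ≤ frobSq (H * Y'' - T)) →
        Y' = Y :=
  Iff.rfl

namespace IsUniqueFrobMin

lemma eq_of_frobSq_le (hY : IsUniqueFrobMin H T Y) {Y' : Matrix b c ℂ}
    (hle : frobSq (H * Y' - T) ≤ frobSq (H * Y - T)) : Y' = Y :=
  (isUniqueFrobMin_iff.mp hY).2 Y' fun Y'' => hle.trans ((isUniqueFrobMin_iff.mp hY).1 Y'')

lemma of_frobSq_eq {a' : Type*} [Fintype a'] {H' : Matrix a' b ℂ} {T' : Matrix a' c ℂ}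
    (hY : IsUniqueFrobMin H T Y)
    (h : ∀ Y' : Matrix b c ℂ, frobSq (H' * Y' - T') = frobSq (H * Y' - T)) :
    IsUniqueFrobMin H' T' Y := by
  rw [isUniqueFrobMin_iff] at hY ⊢
  exact ⟨fun Y' => by simpa only [h] using hY.1 Y',
    fun Y' hY' => hY.2 Y' fun Y'' => by simpa only [h] using hY' Y''⟩

lemma unitary_mul [DecidableEq a] (hY : IsUniqueFrobMin H T Y) {U : Matrix a a ℂ}
    (hU : Uᴴ * U = 1) : IsUniqueFrobMin (U * H) (U * T) Y :=
  hY.of_frobSq_eq fun Y' => by rw [Matrix.mul_assoc, ← Matrix.mul_sub, frobSq_unitary_mul hU]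

lemma submatrix {a' b' : Type*} [Fintype a'] [Fintype b'] (hY : IsUniqueFrobMin H T Y)
    (e : a' ≃ a) (f : b' ≃ b) :
    IsUniqueFrobMin (H.submatrix e f) (T.submatrix e id) (Y.submatrix f id) := by
  have key : ∀ Y' : Matrix b' c ℂ, frobSq (H.submatrix e f * Y' - T.submatrix e id)
      = frobSq (H * Y'.submatrix f.symm id - T) := fun Y' => by
    rw [← frobSq_submatrix _ e (Equiv.refl c)]
    congr 1
    ext i k
    simp [mul_apply, ← f.sum_comp]
  rw [isUniqueFrobMin_iff] at hY ⊢
  refine ⟨fun Y' => ?_, fun Y' hY' => ?_⟩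
  · rw [key, key]
    simpa using hY.1 _
  · have := hY.2 (Y'.submatrix f.symm id) fun Y'' => by
      have h := hY' (Y''.submatrix f id)
      rwa [key, key, submatrix_submatrix, Equiv.self_comp_symm, Function.comp_id,
        submatrix_id_id] at h
    rw [← this]
    ext i k
    simp

variable {m k l : Type*} [Fintype m] [Fintype k] [Fintype l]

lemma eq_of_fromRows {H₁ : Matrix m b ℂ} {H₂ : Matrix k b ℂ}
    {t : Matrix m c ℂ} {h : Matrix k c ℂ} {Y' : Matrix b c ℂ}
    (hY : IsUniqueFrobMin (fromRows H₁ H₂) (fromRows t h) Y)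
    (h₁ : H₁ * Y' = t) (h₂ : H₂ * Y' = H₂ * Y) : Y' = Y := by
  refine hY.eq_of_frobSq_le ?_
  rw [fromRows_mul, fromRows_mul, fromRows_sub_fromRows, fromRows_sub_fromRows, frobSq_fromRows,
    frobSq_fromRows, h₁, h₂, sub_self, frobSq_zero, zero_add]
  exact le_add_of_nonneg_left (frobSq_nonneg _)

variable [DecidableEq m] {R : Matrix m m ℂ} {t : Matrix m c ℂ}

lemma eq_inv_mul_of_fromRows_zero {h : Matrix k c ℂ} {Y : Matrix m c ℂ}
    (hY : IsUniqueFrobMin (fromRows R 0) (fromRows t h) Y) (hR : IsUnit R) : Y = R⁻¹ * t := by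
  refine (hY.eq_of_fromRows ?_ ?_).symm
  · rw [← Matrix.mul_assoc, mul_nonsing_inv _ ((isUnit_iff_isUnit_det R).mp hR), Matrix.one_mul]
  · simp

lemma toRows₁_eq_of_fromBlocks {Z : Matrix m l ℂ} {K : Matrix k l ℂ} {h : Matrix k c ℂ}
    {Y : Matrix (m ⊕ l) c ℂ} (hY : IsUniqueFrobMin (fromBlocks R Z 0 K) (fromRows t h) Y)
    (hR : IsUnit R) : toRows₁ Y = R⁻¹ * (t - Z * toRows₂ Y) := by
  rw [← fromRows_fromCols_eq_fromBlocks] at hY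
  have hY' := hY.eq_of_fromRows (Y' := fromRows (R⁻¹ * (t - Z * toRows₂ Y)) (toRows₂ Y)) ?_ ?_
  · exact (congrArg toRows₁ hY').symm.trans (toRows₁_fromRows _ _)
  · rw [fromCols_mul_fromRows, ← Matrix.mul_assoc,
      mul_nonsing_inv _ ((isUnit_iff_isUnit_det R).mp hR), Matrix.one_mul, sub_add_cancel]
  · rw [fromCols_mul_fromRows]
    conv_rhs => rw [← fromRows_toRows Y, fromCols_mul_fromRows]
    simp

end IsUniqueFrobMin

end LeastSquares

section BlockForms

variable {m L : ℕ}

def lastSplit (m L : ℕ) : (Fin m × Fin L) ⊕ Fin L ≃ Fin (m + 1) × Fin L where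
  toFun := Sum.elim (fun x => (x.1.castSucc, x.2)) (fun a => (Fin.last m, a))
  invFun r := Fin.lastCases (Sum.inr r.2) (fun i => Sum.inl (i, r.2)) r.1
  left_inv := by rintro (⟨i, a⟩ | a) <;> simp
  right_inv := by
    rintro ⟨i, a⟩
    induction i using Fin.lastCases <;> simp

@[simp]
lemma lastSplit_inl (x : Fin m × Fin L) : lastSplit m L (Sum.inl x) = (x.1.castSucc, x.2) := rfl

@[simp]
lemma lastSplit_inr (a : Fin L) : lastSplit m L (Sum.inr a) = (Fin.last m, a) := rfl

def lastSplitTwo (m L : ℕ) : (Fin m × Fin L) ⊕ (Fin L ⊕ Fin L) ≃ Fin (m + 2) × Fin L :=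
  (Equiv.sumAssoc _ _ _).symm.trans ((Equiv.sumCongr (lastSplit m L) (Equiv.refl _)).trans
    (lastSplit (m + 1) L))

lemma stackZero_submatrix_lastSplit (R : Matrix (Fin m × Fin L) (Fin m × Fin L) ℂ) :
    (stackZero R).submatrix (lastSplit m L) id = fromRows R 0 := by
  ext (⟨i, a⟩ | a) c <;> simp [stackZero]

lemma threeBlock_submatrix (R : Matrix (Fin m × Fin L) (Fin m × Fin L) ℂ)
    (Z : Matrix (Fin m × Fin L) (Fin L) ℂ) (Hmid Hbot : Matrix (Fin L) (Fin L) ℂ) :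
    (threeBlock R Z Hmid Hbot).submatrix (lastSplitTwo m L) (lastSplit m L)
      = fromBlocks R Z 0 (fromRows Hmid Hbot) := by
  ext (⟨i, a⟩ | a | a) (⟨j, b⟩ | b) <;> simp [threeBlock, lastSplitTwo]

lemma extendOne_submatrix_lastSplit (Q : Matrix (Fin m × Fin L) (Fin m × Fin L) ℂ) :
    (extendOne Q).submatrix (lastSplit m L) (lastSplit m L) = fromBlocks Q 0 0 1 := by
  ext (⟨i, a⟩ | a) (⟨j, b⟩ | b) <;> simp [extendOne, one_apply]

lemma extendOne_unitary {Q : Matrix (Fin m × Fin L) (Fin m × Fin L) ℂ} (hQ : Qᴴ * Q = 1) :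
    (extendOne Q)ᴴ * extendOne Q = 1 := by
  refine conjTranspose_mul_self_eq_one_of_submatrix (lastSplit m L) ?_
  simp [extendOne_submatrix_lastSplit, fromBlocks_conjTranspose, fromBlocks_multiply, hQ]

lemma extendOne_mul_EL_submatrix (Q : Matrix (Fin (m + 1) × Fin L) (Fin (m + 1) × Fin L) ℂ)
    (S0 : Matrix (Fin L) (Fin L) ℂ) :
    (extendOne Q * (EL (m + 2) L * S0)).submatrix (lastSplit (m + 1) L) id
      = fromRows (Q * (EL (m + 1) L * S0)) 0 := by
  have hEL : (EL (m + 2) L * S0).submatrix (lastSplit (m + 1) L) id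
      = fromRows (EL (m + 1) L * S0) 0 := by
    ext (⟨i, a⟩ | a) c <;> simp [EL, mul_apply]
  rw [← submatrix_mul_equiv _ _ _ (lastSplit (m + 1) L), extendOne_submatrix_lastSplit, hEL,
    fromBlocks_mul_fromRows]
  simp

end BlockForms

namespace BlockArnoldi

variable {n L p : ℕ} (D : BlockArnoldi n L p)

lemma Wfull_submatrix_lastSplit :
    D.Wfull.submatrix id (lastSplit p L) = fromCols D.Wprev D.Vj := by
  ext r (⟨i, a⟩ | a) <;> rfl

lemma orthonormal_blocks :
    D.Wprevᴴ * D.Wprev = 1 ∧ D.Wprevᴴ * D.Vj = 0 ∧ D.Vjᴴ * D.Wprev = 0 ∧ D.Vjᴴ * D.Vj = 1 := by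
  have h : (D.Wfull.submatrix id (lastSplit p L))ᴴ * D.Wfull.submatrix id (lastSplit p L) = 1 :=
    conjTranspose_mul_self_submatrix_id D.orth
      (((Fin.castSucc_injective _).prodMap Function.injective_id).comp (lastSplit p L).injective)
  rw [Wfull_submatrix_lastSplit,
    conjTranspose_fromCols_eq_fromRows_conjTranspose, fromRows_mul_fromCols,
    ← fromBlocks_one] at h
  simp only [fromBlocks_inj] at h
  exact h

lemma Wprev_mulVec_mem_blockKrylov (u : Fin p × Fin L → ℂ) :
    D.Wprev *ᵥ u ∈ blockKrylov D.A (D.B - D.A * D.X0) p := by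
  rw [D.span p (by omega)]
  have hu : D.Wprev *ᵥ u ∈ Submodule.span ℂ (Set.range D.Wprev.col) := by
    rw [← range_mulVecLin]
    exact ⟨u, rfl⟩
  refine Submodule.span_mono ?_ hu
  rintro _ ⟨⟨i, a⟩, rfl⟩
  exact ⟨(i.castSucc.castSucc, a), by simp, rfl⟩

end BlockArnoldi

namespace QRSetup

variable {L p : ℕ} {Hbar : Matrix (Fin (p+2) × Fin L) (Fin (p+1) × Fin L) ℂ}
  {S0 : Matrix (Fin L) (Fin L) ℂ}

def rhsTop (S : QRSetup L p Hbar S0) : Matrix (Fin p × Fin L) (Fin L) ℂ :=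
  toRows₁ ((S.Qbar * (EL (p + 1) L * S0)).submatrix (lastSplit p L) id)

variable {n : ℕ} {D : BlockArnoldi n L p} (S : QRSetup L p D.Hbar D.S0)

lemma eq_of_isBlockGMRESprev {Yprev : Matrix (Fin p × Fin L) (Fin L) ℂ}
    (hYprev : IsBlockGMRESprev D Yprev) :
    Yprev = S.R⁻¹ * S.rhsTop := by
  have h := (hYprev.unitary_mul S.Qbar_unit).submatrix (lastSplit p L) (Equiv.refl _)
  have hQR : S.Qbar * D.Hprev = stackZero S.R := S.qr_prev
  simp only [Equiv.coe_refl, hQR, stackZero_submatrix_lastSplit, submatrix_id_id] at h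
  rw [← fromRows_toRows ((S.Qbar * (EL (p + 1) L * D.S0)).submatrix (lastSplit p L) id)] at h
  exact h.eq_inv_mul_of_fromRows_zero S.R_inv

lemma toRows₁_eq_of_isBlockGMRESj {Yj : Matrix (Fin (p+1) × Fin L) (Fin L) ℂ}
    (hYj : IsBlockGMRESj D Yj) :
    toRows₁ (Yj.submatrix (lastSplit p L) id)
      = S.R⁻¹ * (S.rhsTop - S.Z * toRows₂ (Yj.submatrix (lastSplit p L) id)) := by
  have h := (hYj.unitary_mul (extendOne_unitary S.Qbar_unit)).submatrix (lastSplitTwo p L)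
    (lastSplit p L)
  have hT : toRows₁ ((extendOne S.Qbar * (EL (p + 2) L * D.S0)).submatrix (lastSplitTwo p L) id)
      = S.rhsTop := by
    change toRows₁ ((toRows₁ ((extendOne S.Qbar * (EL (p + 2) L * D.S0)).submatrix
      (lastSplit (p + 1) L) id)).submatrix (lastSplit p L) id) = _
    rw [extendOne_mul_EL_submatrix, toRows₁_fromRows]
    rfl
  rw [S.qr_split, threeBlock_submatrix,
    ← fromRows_toRows ((extendOne S.Qbar * (EL (p + 2) L * D.S0)).submatrix (lastSplitTwo p L) id),
    hT] at h
  exact h.toRows₁_eq_of_fromBlocks S.R_inv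

lemma gmres_update_eq {Yj : Matrix (Fin (p+1) × Fin L) (Fin L) ℂ} (hYj : IsBlockGMRESj D Yj)
    {Yprev : Matrix (Fin p × Fin L) (Fin L) ℂ} (hYprev : IsBlockGMRESprev D Yprev) :
    D.Wfull * Yj - D.Wprev * Yprev
      = (D.Vj - D.Wprev * S.R⁻¹ * S.Z) * toRows₂ (Yj.submatrix (lastSplit p L) id) := by
  have hsplit : D.Wfull * Yj = D.Wprev * toRows₁ (Yj.submatrix (lastSplit p L) id)
      + D.Vj * toRows₂ (Yj.submatrix (lastSplit p L) id) := by
    rw [← fromCols_mul_fromRows, ← D.Wfull_submatrix_lastSplit, fromRows_toRows,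
      submatrix_mul_equiv, submatrix_id_id]
  rw [hsplit, S.toRows₁_eq_of_isBlockGMRESj hYj, S.eq_of_isBlockGMRESprev hYprev]
  simp only [Matrix.mul_sub, Matrix.sub_mul, Matrix.mul_assoc]
  abel

end QRSetup

/-- Decompose the block GMRES update
`S_j^(G) = X_j^(G) - X_{j-1}^(G)` as `S_{j,1} + S_{j,2}` with
`S_{j,1} = W_{j-1} W_{j-1}ᴴ S_j^(G)` and `S_{j,2} = V_j V_jᴴ S_j^(G)`.  Then
`𝔑_j = -W_{j-1} R_{j-1}⁻¹ Z_j V_jᴴ` is nilpotent (`𝔑_j² = 0`), its column space is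
contained in `𝕂_{j-1}(A, F₀)`, it annihilates the orthogonal complement of the column
space of `V_j`, and `S_{j,1} = 𝔑_j S_{j,2}`. -/
theorem stmt12 {n L p : ℕ} (D : BlockArnoldi n L p) (S : QRSetup L p D.Hbar D.S0)
    (Yj : Matrix (Fin (p+1) × Fin L) (Fin L) ℂ) (hYj : IsBlockGMRESj D Yj)
    (Yprev : Matrix (Fin p × Fin L) (Fin L) ℂ) (hYprev : IsBlockGMRESprev D Yprev) :
    ∀ Sg : Matrix (Fin n) (Fin L) ℂ,
      Sg = (D.X0 + D.Wfull * Yj) - (D.X0 + D.Wprev * Yprev) →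
    ∀ Ng : Matrix (Fin n) (Fin n) ℂ,
      Ng = -(D.Wprev * S.R⁻¹ * S.Z * D.Vjᴴ) →
    Ng * Ng = 0 ∧
    (∀ v : Fin n → ℂ, Ng *ᵥ v ∈ blockKrylov D.A (D.B - D.A * D.X0) p) ∧
    (∀ v : Fin n → ℂ, D.Vjᴴ *ᵥ v = 0 → Ng *ᵥ v = 0) ∧
    D.Wprev * D.Wprevᴴ * Sg = Ng * (D.Vj * D.Vjᴴ * Sg) := by
  rintro Sg hSg Ng rfl
  obtain ⟨hWW, hWV, hVW, hVV⟩ := D.orthonormal_blocks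
  have hS : Sg = (D.Vj - D.Wprev * S.R⁻¹ * S.Z) * toRows₂ (Yj.submatrix (lastSplit p L) id) := by
    rw [hSg, add_sub_add_left_eq_sub, S.gmres_update_eq hYj hYprev]
  refine ⟨?_, fun v => ?_, fun v hv => ?_, ?_⟩
  · simp only [neg_mul_neg, Matrix.mul_assoc, ← Matrix.mul_assoc D.Vjᴴ D.Wprev, hVW,
      Matrix.zero_mul, Matrix.mul_zero]
  · rw [neg_mulVec, Matrix.mul_assoc, Matrix.mul_assoc, ← mulVec_mulVec]
    exact neg_mem (D.Wprev_mulVec_mem_blockKrylov _)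
  · rw [neg_mulVec, ← mulVec_mulVec, hv, mulVec_zero, neg_zero]
  · simp only [hS, Matrix.neg_mul, Matrix.mul_sub, Matrix.sub_mul, Matrix.mul_assoc,
      ← Matrix.mul_assoc D.Wprevᴴ, ← Matrix.mul_assoc D.Vjᴴ, hWW, hWV, hVW, hVV, Matrix.one_mul,
      Matrix.zero_mul, Matrix.mul_zero]
    abel

end
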